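/- Let $A, B \subseteq \mathbb{R}$ be closed sets of positive Lebesgue measure. Then the product set $A \times B \subset \mathbb{R}^2$ is not $c$-removable; that is, there exists a function $f : \mathbb{R}^2 \to \mathbb{R}$ which is continuous on $\mathbb{R}^2$ and locally convex on $\mathbb{R}^2 \setminus (A \times B)$, but which is not convex on $\mathbb{R}^2$. -/

import Mathlib

/-- `f` is locally convex on the open set `U`: every point of `U` has an open convex
neighbourhood `V ⊆ U` on which `f` is convex. -/
def IsLocallyConvexOn (U : Set (ℝ × ℝ)) (f : ℝ × ℝ → ℝ) : Prop :=
  ∀ x ∈ U, ∃ V : Set (ℝ × ℝ),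
    IsOpen V ∧ Convex ℝ V ∧ x ∈ V ∧ V ⊆ U ∧ ConvexOn ℝ V f

/-!
Let `g_A(x) = ∫₀ˣ 1_A` and `G_A(x) = ∫₀ˣ g_A`, and take
`f(x, y) = xy + h_A(x) + h_B(y)` with `h_A(x) = 5/4 x² - 2 G_A(x)`.

Since `f = (x + y/2)² + (x²/4 - 2 G_A(x)) + (y² - 2 G_B(y))`, and `y - g_B(y)` is nondecreasing,
`f` is convex on every vertical strip missing `A`, where `g_A` is constant; symmetrically on
every horizontal strip missing `B`. These strips cover the complement of `A × B`.

By the Lebesgue differentiation theorem there are `a ∈ A`, `b ∈ B` with `g_A'(a) = g_B'(b) = 1`.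
Along the line `t ↦ (a + t, b - t)` the second derivative of `f` at `t = 0` is then
`-2 + 1/2 + 1/2 = -1`, so `f` is not convex. The constant `5/4` is chosen between `(1 + √2)/2`,
needed for the first decomposition, and `3/2`, needed for this sign.
-/

open MeasureTheory Set Filter

theorem convexOn_of_hasDerivAt_of_monotoneOn {D : Set ℝ} (hD : Convex ℝ D) {f f' : ℝ → ℝ}
    (hf : ∀ x, HasDerivAt f (f' x) x) (hf' : MonotoneOn f' D) : ConvexOn ℝ D f := by
  have hderiv : deriv f = f' := funext fun x => (hf x).deriv
  refine MonotoneOn.convexOn_of_deriv hD (fun x _ => (hf x).continuousAt.continuousWithinAt)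
    (fun x _ => (hf x).differentiableAt.differentiableWithinAt) ?_
  exact hderiv ▸ hf'.mono interior_subset

theorem ConvexOn.nonneg_of_hasDerivAt_deriv {f f' : ℝ → ℝ} (hf : ConvexOn ℝ univ f)
    (hf' : ∀ x, HasDerivAt f (f' x) x) {x d : ℝ} (hd : HasDerivAt f' d x) : 0 ≤ d := by
  have hderiv : deriv f = f' := funext fun y => (hf' y).deriv
  have hmono := hf.monotoneOn_deriv fun y _ => (hf' y).differentiableAt
  rw [hderiv, monotoneOn_univ] at hmono
  exact hd.nonneg_of_monotone hmono

theorem ConvexOn.comp_line {E : Type*} [AddCommGroup E] [Module ℝ E] {f : E → ℝ}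
    (hf : ConvexOn ℝ univ f) (p v : E) : ConvexOn ℝ univ fun t : ℝ => f (p + t • v) := by
  refine ⟨convex_univ, fun x _ y _ a b ha hb hab => ?_⟩
  convert hf.2 (mem_univ (p + x • v)) (mem_univ (p + y • v)) ha hb hab using 2
  calc p + (a • x + b • y) • v = (a + b) • p + (a • x + b • y) • v := by rw [hab, one_smul]
    _ = _ := by module

theorem ConvexOn.comp_fst {I : Set ℝ} {φ : ℝ → ℝ} (hφ : ConvexOn ℝ I φ) :
    ConvexOn ℝ (I ×ˢ univ) fun p : ℝ × ℝ => φ p.1 := by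
  rw [prod_univ]
  exact hφ.comp_linearMap (LinearMap.fst ℝ ℝ ℝ)

theorem ConvexOn.comp_snd {I : Set ℝ} {φ : ℝ → ℝ} (hφ : ConvexOn ℝ I φ) :
    ConvexOn ℝ (univ ×ˢ I) fun p : ℝ × ℝ => φ p.2 := by
  rw [univ_prod]
  exact hφ.comp_linearMap (LinearMap.snd ℝ ℝ ℝ)

theorem convexOn_sq_fst_add_mul_snd (c : ℝ) :
    ConvexOn ℝ univ fun p : ℝ × ℝ => (p.1 + c * p.2) ^ 2 :=
  (even_two.convexOn_pow (𝕜 := ℝ)).comp_linearMap (LinearMap.fst ℝ ℝ ℝ + c • LinearMap.snd ℝ ℝ ℝ)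

noncomputable section

def indicatorPrimitive (A : Set ℝ) (x : ℝ) : ℝ := ∫ t in (0 : ℝ)..x, A.indicator 1 t

def indicatorPrimitive₂ (A : Set ℝ) (x : ℝ) : ℝ := ∫ t in (0 : ℝ)..x, indicatorPrimitive A t

def profile (A : Set ℝ) (x : ℝ) : ℝ := 5 / 4 * x ^ 2 - 2 * indicatorPrimitive₂ A x

def counterexample (A B : Set ℝ) (p : ℝ × ℝ) : ℝ := p.1 * p.2 + profile A p.1 + profile B p.2

end

section IndicatorPrimitive

variable {A : Set ℝ} (hA : MeasurableSet A)
include hA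

theorem locallyIntegrable_indicator_one : LocallyIntegrable (A.indicator (1 : ℝ → ℝ)) volume :=
  (locallyIntegrable_const 1).indicator hA

theorem intervalIntegrable_indicator_one (a b : ℝ) :
    IntervalIntegrable (A.indicator (1 : ℝ → ℝ)) volume a b :=
  ((locallyIntegrable_indicator_one hA).integrableOn_isCompact isCompact_uIcc).intervalIntegrable

theorem indicatorPrimitive_sub (a b : ℝ) :
    indicatorPrimitive A b - indicatorPrimitive A a = ∫ t in a..b, A.indicator 1 t :=
  intervalIntegral.integral_interval_sub_left (intervalIntegrable_indicator_one hA 0 b)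
    (intervalIntegrable_indicator_one hA 0 a)

theorem continuous_indicatorPrimitive : Continuous (indicatorPrimitive A) :=
  intervalIntegral.continuous_primitive (intervalIntegrable_indicator_one hA) 0

theorem monotone_id_sub_indicatorPrimitive : Monotone fun x => x - indicatorPrimitive A x := by
  intro a b hab
  have : ∫ t in a..b, A.indicator 1 t ≤ ∫ _ in a..b, (1 : ℝ) :=
    intervalIntegral.integral_mono_on hab (intervalIntegrable_indicator_one hA a b)
      intervalIntegrable_const fun t _ => indicator_le_self' (fun _ _ => zero_le_one) t
  rw [← indicatorPrimitive_sub hA, intervalIntegral.integral_const, smul_eq_mul, mul_one] at this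
  dsimp only
  linarith

theorem indicatorPrimitive_eq_of_uIcc_subset_compl {a b : ℝ} (h : uIcc a b ⊆ Aᶜ) :
    indicatorPrimitive A b = indicatorPrimitive A a := by
  have hzero : EqOn (A.indicator (1 : ℝ → ℝ)) 0 (uIcc a b) :=
    fun t ht => indicator_of_notMem (h ht) _
  have : ∫ t in a..b, A.indicator (1 : ℝ → ℝ) t = 0 := by
    rw [intervalIntegral.integral_congr hzero]
    exact intervalIntegral.integral_zero
  linarith [indicatorPrimitive_sub hA a b]

theorem hasDerivAt_indicatorPrimitive₂ (x : ℝ) :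
    HasDerivAt (indicatorPrimitive₂ A) (indicatorPrimitive A x) x :=
  (continuous_indicatorPrimitive hA).integral_hasStrictDerivAt 0 x |>.hasDerivAt

theorem exists_hasDerivAt_indicatorPrimitive_one (hAm : 0 < volume A) :
    ∃ a, HasDerivAt (indicatorPrimitive A) 1 a := by
  have hae := LocallyIntegrable.ae_hasDerivAt_integral (locallyIntegrable_indicator_one hA)
  have : (ae (volume.restrict A)).NeBot := by
    rw [ae_neBot, ← Measure.measure_univ_pos, Measure.restrict_apply_univ]
    exact hAm
  refine Eventually.exists (f := ae (volume.restrict A)) ?_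
  filter_upwards [ae_restrict_of_ae hae, ae_restrict_mem hA] with x hx hxA
  have := hx 0
  rwa [indicator_of_mem hxA] at this

end IndicatorPrimitive

theorem hasDerivAt_five_halves_mul_sub_two_mul {g : ℝ → ℝ} {x : ℝ} (hg : HasDerivAt g 1 x) :
    HasDerivAt (fun y => 5 / 2 * y - 2 * g y) (1 / 2) x :=
  (((hasDerivAt_id' x).const_mul (5 / 2)).sub (hg.const_mul 2)).congr_deriv (by norm_num)

section Counterexample

variable {A B : Set ℝ} (hA : MeasurableSet A) (hB : MeasurableSet B)
include hA

theorem hasDerivAt_profile (x : ℝ) :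
    HasDerivAt (profile A) (5 / 2 * x - 2 * indicatorPrimitive A x) x :=
  (((hasDerivAt_pow 2 x).const_mul (5 / 4)).sub
    ((hasDerivAt_indicatorPrimitive₂ hA x).const_mul 2)).congr_deriv (by norm_num; ring)

theorem continuous_profile : Continuous (profile A) :=
  continuous_iff_continuousAt.2 fun x => (hasDerivAt_profile hA x).continuousAt

theorem convexOn_sq_sub_two_mul_indicatorPrimitive₂ :
    ConvexOn ℝ univ fun x => x ^ 2 - 2 * indicatorPrimitive₂ A x := by
  refine convexOn_of_hasDerivAt_of_monotoneOn convex_univ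
    (f' := fun x => 2 * (x - indicatorPrimitive A x)) (fun x => ?_) ?_
  · exact ((hasDerivAt_pow 2 x).sub ((hasDerivAt_indicatorPrimitive₂ hA x).const_mul 2)).congr_deriv
      (by norm_num; ring)
  · exact ((monotone_id_sub_indicatorPrimitive hA).const_mul zero_le_two).monotoneOn _

theorem convexOn_sq_div_four_sub_two_mul_indicatorPrimitive₂ {I : Set ℝ} (hI : Convex ℝ I)
    (hIA : I ⊆ Aᶜ) : ConvexOn ℝ I fun x => x ^ 2 / 4 - 2 * indicatorPrimitive₂ A x := by
  refine convexOn_of_hasDerivAt_of_monotoneOn hI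
    (f' := fun x => x / 2 - 2 * indicatorPrimitive A x) (fun x => ?_) fun x hx y hy hxy => ?_
  · exact (((hasDerivAt_pow 2 x).div_const 4).sub
      ((hasDerivAt_indicatorPrimitive₂ hA x).const_mul 2)).congr_deriv (by norm_num; ring)
  · have hxy' : uIcc x y ⊆ Aᶜ := (hI.ordConnected.uIcc_subset hx hy).trans hIA
    dsimp only
    rw [indicatorPrimitive_eq_of_uIcc_subset_compl hA hxy']
    linarith

include hB

theorem continuous_counterexample : Continuous (counterexample A B) :=
  ((continuous_fst.mul continuous_snd).add ((continuous_profile hA).comp continuous_fst)).add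
    ((continuous_profile hB).comp continuous_snd)

theorem convexOn_counterexample_prod_univ {I : Set ℝ} (hI : Convex ℝ I) (hIA : I ⊆ Aᶜ) :
    ConvexOn ℝ (I ×ˢ univ) (counterexample A B) := by
  have hsum := (((convexOn_sq_fst_add_mul_snd 2⁻¹).subset (subset_univ _)
    (hI.prod convex_univ)).add
    (convexOn_sq_div_four_sub_two_mul_indicatorPrimitive₂ hA hI hIA).comp_fst).add
    ((convexOn_sq_sub_two_mul_indicatorPrimitive₂ hB).comp_snd.subset
      (prod_mono (subset_univ I) subset_rfl) (hI.prod convex_univ))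
  refine hsum.congr fun p _ => ?_
  simp only [Pi.add_apply, counterexample, profile]
  ring

theorem convexOn_counterexample_univ_prod {I : Set ℝ} (hI : Convex ℝ I) (hIB : I ⊆ Bᶜ) :
    ConvexOn ℝ (univ ×ˢ I) (counterexample A B) := by
  have := (convexOn_counterexample_prod_univ hB hA hI hIB).comp_linearMap
    (LinearEquiv.prodComm ℝ ℝ ℝ).toLinearMap
  have hset : (LinearEquiv.prodComm ℝ ℝ ℝ).toLinearMap ⁻¹' (I ×ˢ univ) = univ ×ˢ I :=
    preimage_swap_prod I univ
  have hswap :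
      counterexample B A ∘ (LinearEquiv.prodComm ℝ ℝ ℝ).toLinearMap = counterexample A B := by
    funext p
    simp only [counterexample, Function.comp_apply, LinearEquiv.coe_coe,
      LinearEquiv.prodComm_apply, Prod.fst_swap, Prod.snd_swap]
    ring
  rwa [hset, hswap] at this

theorem not_convexOn_counterexample (hAm : 0 < volume A) (hBm : 0 < volume B) :
    ¬ ConvexOn ℝ univ (counterexample A B) := by
  obtain ⟨a, ha⟩ := exists_hasDerivAt_indicatorPrimitive_one hA hAm
  obtain ⟨b, hb⟩ := exists_hasDerivAt_indicatorPrimitive_one hB hBm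
  intro hconv
  set φ' : ℝ → ℝ := fun t => (b - t) - (a + t)
    + (5 / 2 * (a + t) - 2 * indicatorPrimitive A (a + t))
    - (5 / 2 * (b - t) - 2 * indicatorPrimitive B (b - t))
  have hline_eq : (fun t : ℝ => counterexample A B ((a, b) + t • (1, -1)))
      = fun t => (a + t) * (b - t) + profile A (a + t) + profile B (b - t) := by
    funext t
    rw [counterexample]
    simp only [Prod.fst_add, Prod.snd_add, Prod.smul_fst, Prod.smul_snd, smul_eq_mul]
    ring_nf
  have hφ : ∀ t, HasDerivAt (fun t : ℝ => counterexample A B ((a, b) + t • (1, -1))) (φ' t) t := by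
    intro t
    rw [hline_eq]
    exact ((((hasDerivAt_id' t).const_add a).mul ((hasDerivAt_id' t).const_sub b)).add
      ((hasDerivAt_profile hA (a + t)).comp_const_add a t) |>.add
      ((hasDerivAt_profile hB (b - t)).comp_const_sub b t)).congr_deriv (by ring)
  have hφ' : HasDerivAt φ' (-1) 0 := by
    have hA' := hasDerivAt_five_halves_mul_sub_two_mul ha
    have hB' := hasDerivAt_five_halves_mul_sub_two_mul hb
    rw [← add_zero a] at hA'
    rw [← sub_zero b] at hB'
    exact ((((hasDerivAt_id' 0).const_sub b).sub ((hasDerivAt_id' 0).const_add a)).add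
      (hA'.comp_const_add a 0) |>.sub (hB'.comp_const_sub b 0)).congr_deriv (by norm_num)
  exact absurd ((hconv.comp_line (a, b) (1, -1)).nonneg_of_hasDerivAt_deriv hφ hφ') (by norm_num)

end Counterexample

theorem isLocallyConvexOn_counterexample {A B : Set ℝ} (hA : IsClosed A) (hB : IsClosed B) :
    IsLocallyConvexOn (A ×ˢ B)ᶜ (counterexample A B) := by
  rintro ⟨x, y⟩ hxy
  rw [mem_compl_iff, mem_prod, not_and_or] at hxy
  rcases hxy with hx | hy
  · obtain ⟨δ, hδ, hball⟩ := Metric.isOpen_iff.1 hA.isOpen_compl x hx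
    exact ⟨Metric.ball x δ ×ˢ univ, Metric.isOpen_ball.prod isOpen_univ,
      (convex_ball x δ).prod convex_univ, ⟨Metric.mem_ball_self hδ, mem_univ y⟩,
      fun p hp hpAB => hball hp.1 hpAB.1,
      convexOn_counterexample_prod_univ hA.measurableSet hB.measurableSet (convex_ball x δ) hball⟩
  · obtain ⟨δ, hδ, hball⟩ := Metric.isOpen_iff.1 hB.isOpen_compl y hy
    exact ⟨univ ×ˢ Metric.ball y δ, isOpen_univ.prod Metric.isOpen_ball,
      convex_univ.prod (convex_ball y δ), ⟨mem_univ x, Metric.mem_ball_self hδ⟩,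
      fun p hp hpAB => hball hp.2 hpAB.2,
      convexOn_counterexample_univ_prod hA.measurableSet hB.measurableSet (convex_ball y δ) hball⟩

theorem statement2 (A B : Set ℝ) (hA : IsClosed A) (hB : IsClosed B)
    (hAm : 0 < MeasureTheory.volume A) (hBm : 0 < MeasureTheory.volume B) :
    ∃ f : ℝ × ℝ → ℝ, Continuous f ∧ IsLocallyConvexOn (A ×ˢ B)ᶜ f ∧
      ¬ ConvexOn ℝ Set.univ f :=
  ⟨counterexample A B, continuous_counterexample hA.measurableSet hB.measurableSet,
    isLocallyConvexOn_counterexample hA hB,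
    not_convexOn_counterexample hA.measurableSet hB.measurableSet hAm hBm⟩
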